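/- Let H be a complex Hilbert space and t, s densely defined closed operators on H. For a densely defined closed operator t, let t̂ be the operator on H ⊕ H with domain Dom(t) × Dom(t*) given by t̂(x, y) = (t*y, tx). Then t̂ and ŝ are densely defined closed operators on H ⊕ H and ‖P_{G(t̂)} − P_{G(ŝ)}‖ = ‖P_{G(t)} − P_{G(s)}‖, where the graph projections are taken in H ⊕ H and in (H ⊕ H) ⊕ (H ⊕ H) respectively. That is, the map t ↦ t̂ is isometric for the gap metric. -/

import Mathlib

/-!
A unitary W of `(H ⊕ H) ⊕ (H ⊕ H)` reshuffling coordinates carries `G(t̂)` onto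
`G(t) × G(t*)`, so `W P_{G(t̂)} W*` is the block diagonal operator with blocks `P_{G(t)}` and
`P_{G(t*)}`. Since `G(t*)` is the orthogonal complement of `J G(t)` for the unitary
`J (x, y) = (y, -x)`, we have `P_{G(t*)} = 1 - J P_{G(t)} J*`, so the second blocks differ by
`J (P_{G(s)} - P_{G(t)}) J*`. The norm of a block diagonal operator is the larger of the norms
of its blocks, and both blocks of the difference have norm `‖P_{G(t)} - P_{G(s)}‖`.
-/

/-- The graph of a densely defined (partial) operator `t` on a Hilbert space `K`, viewed
as a submodule of the Hilbert space `K ⊕ K` (the `ℓ²`-direct sum `WithLp 2 (K × K)`). -/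
noncomputable def pmapGraph {K : Type*} [NormedAddCommGroup K] [InnerProductSpace ℂ K]
    (t : K →ₗ.[ℂ] K) : Submodule ℂ (WithLp 2 (K × K)) :=
  t.graph.comap (WithLp.linearEquiv 2 ℂ (K × K)).toLinearMap

/-- `P` is the orthogonal projection of the Hilbert space `E` onto the subspace `G`:
it is the (unique) selfadjoint idempotent bounded operator with range `G`. -/
def IsOrthogonalProjectionOnto {E : Type*} [NormedAddCommGroup E] [InnerProductSpace ℂ E]
    [CompleteSpace E] (P : E →L[ℂ] E) (G : Submodule ℂ E) : Prop :=
  IsSelfAdjoint P ∧ IsIdempotentElem P ∧ LinearMap.range (P : E →ₗ[ℂ] E) = G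

/-- `that` is the operator `t̂` on `H ⊕ H` with domain `Dom(t) × Dom(t*)` given by
`t̂(x, y) = (t*y, tx)`. -/
def IsHatOf {H : Type*} [NormedAddCommGroup H] [InnerProductSpace ℂ H] [CompleteSpace H]
    (that : WithLp 2 (H × H) →ₗ.[ℂ] WithLp 2 (H × H)) (t : H →ₗ.[ℂ] H) : Prop :=
  that.domain =
    (t.domain.prod t.adjoint.domain).comap (WithLp.linearEquiv 2 ℂ (H × H)).toLinearMap ∧
  ∀ (p : that.domain) (x : t.domain) (y : t.adjoint.domain),
    WithLp.linearEquiv 2 ℂ (H × H) (↑p : WithLp 2 (H × H)) = ((x : H), (y : H)) →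
    WithLp.linearEquiv 2 ℂ (H × H) (that p) = ((t.adjoint y : H), (t x : H))

open ContinuousLinearMap

namespace LinearIsometryEquiv

section WithLp

variable (𝕜 α β γ δ : Type*) [Ring 𝕜]
  [SeminormedAddCommGroup α] [Module 𝕜 α] [SeminormedAddCommGroup β] [Module 𝕜 β]
  [SeminormedAddCommGroup γ] [Module 𝕜 γ] [SeminormedAddCommGroup δ] [Module 𝕜 δ]

noncomputable def withLpSkewSwap : WithLp 2 (α × β) ≃ₗᵢ[𝕜] WithLp 2 (β × α) :=
  (withLpProdComm 2 𝕜 α β).trans (withLpProdCongr 2 (.neg 𝕜) (refl 𝕜 α))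

@[simp]
theorem withLpSkewSwap_apply (x : WithLp 2 (α × β)) :
    withLpSkewSwap 𝕜 α β x = WithLp.toLp 2 (-x.snd, x.fst) :=
  rfl

@[simp]
theorem withLpSkewSwap_symm_apply (x : WithLp 2 (β × α)) :
    (withLpSkewSwap 𝕜 α β).symm x = WithLp.toLp 2 (x.snd, -x.fst) :=
  rfl

/-- `((a, b), (c, d)) ↦ ((a, d), (b, c))` -/
noncomputable def withLpProdProdShuffle :
    WithLp 2 (WithLp 2 (α × β) × WithLp 2 (γ × δ)) ≃ₗᵢ[𝕜]
      WithLp 2 (WithLp 2 (α × δ) × WithLp 2 (β × γ)) :=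
  (withLpProdAssoc 2 𝕜 α β _).trans <|
    (withLpProdCongr 2 (refl 𝕜 α)
      ((withLpProdAssoc 2 𝕜 β γ δ).symm.trans (withLpProdComm 2 𝕜 _ δ))).trans
    (withLpProdAssoc 2 𝕜 α δ _).symm

end WithLp

theorem norm_conjStarAlgEquiv {𝕜 E F : Type*} [RCLike 𝕜] [NormedAddCommGroup E]
    [InnerProductSpace 𝕜 E] [CompleteSpace E] [NormedAddCommGroup F] [InnerProductSpace 𝕜 F]
    [CompleteSpace F] (U : E ≃ₗᵢ[𝕜] F) (A : E →L[𝕜] E) :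
    ‖U.conjStarAlgEquiv A‖ = ‖A‖ :=
  (opNorm_linearIsometryEquiv_comp U _).trans (opNorm_comp_linearIsometryEquiv A U.symm)

end LinearIsometryEquiv

namespace ContinuousLinearMap

section Normed
variable {𝕜 E F : Type*} [NontriviallyNormedField 𝕜]
  [NormedAddCommGroup E] [NormedSpace 𝕜 E] [NormedAddCommGroup F] [NormedSpace 𝕜 F]

noncomputable def withLpProdMap (A : E →L[𝕜] E) (B : F →L[𝕜] F) :
    WithLp 2 (E × F) →L[𝕜] WithLp 2 (E × F) :=
  ((WithLp.prodContinuousLinearEquiv 2 𝕜 E F).symm : E × F →L[𝕜] WithLp 2 (E × F)).comp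
    ((A.prodMap B).comp
      (WithLp.prodContinuousLinearEquiv 2 𝕜 E F : WithLp 2 (E × F) →L[𝕜] E × F))

@[simp]
theorem withLpProdMap_apply (A : E →L[𝕜] E) (B : F →L[𝕜] F) (x : WithLp 2 (E × F)) :
    withLpProdMap A B x = WithLp.toLp 2 (A x.fst, B x.snd) := rfl

theorem withLpProdMap_sub (A A' : E →L[𝕜] E) (B B' : F →L[𝕜] F) :
    withLpProdMap (A - A') (B - B') = withLpProdMap A B - withLpProdMap A' B' := by
  ext x : 1
  simp [← WithLp.toLp_sub]

theorem withLpProdMap_mul (A A' : E →L[𝕜] E) (B B' : F →L[𝕜] F) :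
    withLpProdMap (A * A') (B * B') = withLpProdMap A B * withLpProdMap A' B' := by
  ext x : 1
  simp

theorem norm_withLpProdMap (A : E →L[𝕜] E) (B : F →L[𝕜] F) :
    ‖withLpProdMap A B‖ = max ‖A‖ ‖B‖ := by
  refine le_antisymm (opNorm_le_bound _ (by positivity) fun x => ?_) (max_le ?_ ?_)
  · have hA : ‖A x.fst‖ ≤ max ‖A‖ ‖B‖ * ‖x.fst‖ :=
      (A.le_opNorm _).trans (by gcongr; exact le_max_left _ _)
    have hB : ‖B x.snd‖ ≤ max ‖A‖ ‖B‖ * ‖x.snd‖ :=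
      (B.le_opNorm _).trans (by gcongr; exact le_max_right _ _)
    rw [← sq_le_sq₀ (norm_nonneg _) (by positivity), mul_pow, WithLp.prod_norm_sq_eq_of_L2,
      WithLp.prod_norm_sq_eq_of_L2 x]
    simp only [withLpProdMap_apply, WithLp.toLp_fst, WithLp.toLp_snd]
    have := pow_le_pow_left₀ (norm_nonneg _) hA 2
    have := pow_le_pow_left₀ (norm_nonneg _) hB 2
    rw [mul_pow] at *
    linarith
  · refine opNorm_le_bound _ (norm_nonneg _) fun x => ?_
    simpa using (withLpProdMap A B).le_opNorm (WithLp.toLp 2 (x, 0))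
  · refine opNorm_le_bound _ (norm_nonneg _) fun y => ?_
    simpa using (withLpProdMap A B).le_opNorm (WithLp.toLp 2 (0, y))

theorem range_withLpProdMap (A : E →L[𝕜] E) (B : F →L[𝕜] F) :
    LinearMap.range (withLpProdMap A B : WithLp 2 (E × F) →ₗ[𝕜] WithLp 2 (E × F)) =
      ((LinearMap.range (A : E →ₗ[𝕜] E)).prod (LinearMap.range (B : F →ₗ[𝕜] F))).comap
        (WithLp.linearEquiv 2 𝕜 (E × F)).toLinearMap := by
  ext z
  simp only [LinearMap.mem_range, Submodule.mem_comap, Submodule.mem_prod]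
  constructor
  · rintro ⟨x, rfl⟩
    exact ⟨⟨x.fst, rfl⟩, ⟨x.snd, rfl⟩⟩
  · rintro ⟨⟨a, ha⟩, ⟨b, hb⟩⟩
    exact ⟨WithLp.toLp 2 (a, b), congrArg (WithLp.toLp 2) (Prod.ext ha hb)⟩

end Normed

variable {𝕜 E F : Type*} [RCLike 𝕜] [NormedAddCommGroup E] [InnerProductSpace 𝕜 E]
  [CompleteSpace E] [NormedAddCommGroup F] [InnerProductSpace 𝕜 F] [CompleteSpace F]

theorem star_withLpProdMap (A : E →L[𝕜] E) (B : F →L[𝕜] F) :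
    star (withLpProdMap A B) = withLpProdMap (star A) (star B) := by
  rw [star_eq_adjoint, star_eq_adjoint, star_eq_adjoint, eq_comm, eq_adjoint_iff]
  intro x y
  simp [WithLp.prod_inner_apply, adjoint_inner_left]

end ContinuousLinearMap

namespace IsOrthogonalProjectionOnto

variable {E F : Type*} [NormedAddCommGroup E] [InnerProductSpace ℂ E] [CompleteSpace E]
  [NormedAddCommGroup F] [InnerProductSpace ℂ F] [CompleteSpace F]
  {P Q : E →L[ℂ] E} {G : Submodule ℂ E}

theorem isStarProjection (hP : IsOrthogonalProjectionOnto P G) : IsStarProjection P :=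
  ⟨hP.2.1, hP.1⟩

theorem eq (hP : IsOrthogonalProjectionOnto P G) (hQ : IsOrthogonalProjectionOnto Q G) :
    P = Q :=
  hP.isStarProjection.ext hQ.isStarProjection (hP.2.2.trans hQ.2.2.symm)

theorem one_sub (hP : IsOrthogonalProjectionOnto P G) :
    IsOrthogonalProjectionOnto (1 - P) Gᗮ := by
  obtain ⟨_, hPG⟩ := isStarProjection_iff_eq_starProjection_range.mp hP.isStarProjection
  have h1P := hP.isStarProjection.one_sub
  refine ⟨h1P.isSelfAdjoint, h1P.isIdempotentElem, ?_⟩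
  rw [hPG, ← Submodule.starProjection_orthogonal', Submodule.range_starProjection, hP.2.2]

theorem conj (U : E ≃ₗᵢ[ℂ] F) (hP : IsOrthogonalProjectionOnto P G) :
    IsOrthogonalProjectionOnto (U.conjStarAlgEquiv P)
      (G.map (U.toLinearEquiv : E →ₗ[ℂ] F)) := by
  refine ⟨hP.1.map _, hP.2.1.map _, ?_⟩
  rw [← hP.2.2, LinearIsometryEquiv.conjStarAlgEquiv_apply]
  simp only [LinearIsometryEquiv.toContinuousLinearEquiv_symm, toLinearMap_comp,
    ContinuousLinearEquiv.toLinearMap_toContinuousLinearMap,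
    ContinuousLinearEquiv.toLinearEquiv_symm, LinearMap.range_comp, LinearEquiv.range,
    Submodule.map_top]
  rfl

theorem withLpProdMap {A : E →L[ℂ] E} {B : F →L[ℂ] F}
    {G₁ : Submodule ℂ E} {G₂ : Submodule ℂ F}
    (hA : IsOrthogonalProjectionOnto A G₁) (hB : IsOrthogonalProjectionOnto B G₂) :
    IsOrthogonalProjectionOnto (withLpProdMap A B)
      ((G₁.prod G₂).comap (WithLp.linearEquiv 2 ℂ (E × F)).toLinearMap) := by
  refine ⟨?_, ?_, ?_⟩
  · rw [IsSelfAdjoint, star_withLpProdMap, hA.1.star_eq, hB.1.star_eq]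
  · rw [IsIdempotentElem, ← withLpProdMap_mul, hA.2.1.eq, hB.2.1.eq]
  · rw [range_withLpProdMap, hA.2.2, hB.2.2]

end IsOrthogonalProjectionOnto

section Graph

variable {K : Type*} [NormedAddCommGroup K] [InnerProductSpace ℂ K]

theorem isClosed_pmapGraph_iff (t : K →ₗ.[ℂ] K) :
    IsClosed (pmapGraph t : Set (WithLp 2 (K × K))) ↔ t.IsClosed :=
  (WithLp.prodContinuousLinearEquiv 2 ℂ K K).toHomeomorph.isClosed_preimage (s := t.graph)

variable [CompleteSpace K]

theorem pmapGraph_adjoint {t : K →ₗ.[ℂ] K} (hdt : Dense (t.domain : Set K)) :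
    pmapGraph t.adjoint = ((pmapGraph t).map
      ((LinearIsometryEquiv.withLpSkewSwap ℂ K K).symm.toLinearEquiv :
        WithLp 2 (K × K) →ₗ[ℂ] WithLp 2 (K × K)))ᗮ := by
  rw [pmapGraph, LinearPMap.adjoint_graph_eq_graph_adjoint hdt, Submodule.adjoint]
  ext z
  simp [pmapGraph, Submodule.mem_orthogonal]

theorem LinearPMap.dense_adjoint_domain {t : K →ₗ.[ℂ] K} (hdt : Dense (t.domain : Set K))
    (hct : t.IsClosed) : Dense (t.adjoint.domain : Set K) := by
  rw [Submodule.dense_iff_topologicalClosure_eq_top, Submodule.topologicalClosure_eq_top_iff,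
    Submodule.eq_bot_iff]
  intro z hz
  -- `z ⊥ Dom(t*)` puts `(z, 0)` in `G(t*)ᗮ = J G(t)`, and `J (x, t x) = (t x, -x) = (z, 0)`
  -- forces `x = 0`.
  set J := (LinearIsometryEquiv.withLpSkewSwap ℂ K K).symm
  set M := (pmapGraph t).map (J.toLinearEquiv : WithLp 2 (K × K) →ₗ[ℂ] WithLp 2 (K × K))
  have hM : _root_.IsClosed (M : Set (WithLp 2 (K × K))) := by
    rw [Submodule.map_coe]
    exact J.toHomeomorph.isClosedMap _ ((isClosed_pmapGraph_iff t).2 hct)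
  have hzM : WithLp.toLp 2 (z, 0) ∈ M := by
    rw [← hM.submodule_topologicalClosure_eq, ← Submodule.orthogonal_orthogonal_eq_closure,
      ← pmapGraph_adjoint hdt, Submodule.mem_orthogonal]
    intro u hu
    simpa [WithLp.prod_inner_apply] using hz u.fst (LinearPMap.mem_domain_of_mem_graph hu)
  obtain ⟨x, hx, hxz⟩ := hzM
  have hx0 : x.fst = 0 := by simpa [J] using congrArg WithLp.snd hxz
  have hxz' : x.snd = z := by simpa [J] using congrArg WithLp.fst hxz
  rw [← hxz']
  exact t.graph_fst_eq_zero_snd hx hx0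

theorem IsOrthogonalProjectionOnto.pmapGraph_adjoint {t : K →ₗ.[ℂ] K}
    (hdt : Dense (t.domain : Set K)) {P : WithLp 2 (K × K) →L[ℂ] WithLp 2 (K × K)}
    (hP : IsOrthogonalProjectionOnto P (pmapGraph t)) :
    IsOrthogonalProjectionOnto
      (1 - (LinearIsometryEquiv.withLpSkewSwap ℂ K K).symm.conjStarAlgEquiv P)
      (pmapGraph t.adjoint) := by
  rw [_root_.pmapGraph_adjoint hdt]
  exact (hP.conj _).one_sub

end Graph

namespace IsHatOf

variable {H : Type*} [NormedAddCommGroup H] [InnerProductSpace ℂ H] [CompleteSpace H]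
  {that : WithLp 2 (H × H) →ₗ.[ℂ] WithLp 2 (H × H)} {t : H →ₗ.[ℂ] H}

theorem mem_domain_iff (hthat : IsHatOf that t) {p : WithLp 2 (H × H)} :
    p ∈ that.domain ↔ p.fst ∈ t.domain ∧ p.snd ∈ t.adjoint.domain := by
  rw [hthat.1]
  exact Iff.rfl

theorem mem_graph_iff (hthat : IsHatOf that t) (p q : WithLp 2 (H × H)) :
    (p, q) ∈ that.graph ↔
      (p.fst, q.snd) ∈ t.graph ∧ (p.snd, q.fst) ∈ t.adjoint.graph := by
  simp only [LinearPMap.mem_graph_iff]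
  constructor
  · rintro ⟨u, rfl, rfl⟩
    obtain ⟨h₁, h₂⟩ := hthat.mem_domain_iff.1 u.2
    have happ := hthat.2 u ⟨_, h₁⟩ ⟨_, h₂⟩ rfl
    exact ⟨⟨⟨_, h₁⟩, rfl, (congrArg Prod.snd happ).symm⟩,
      ⟨⟨_, h₂⟩, rfl, (congrArg Prod.fst happ).symm⟩⟩
  · rintro ⟨⟨x, hx, hxq⟩, ⟨y, hy, hyq⟩⟩
    have hp : p ∈ that.domain := hthat.mem_domain_iff.2 ⟨hx ▸ x.2, hy ▸ y.2⟩
    refine ⟨⟨p, hp⟩, rfl, ?_⟩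
    have happ := hthat.2 ⟨p, hp⟩ x y (Prod.ext hx.symm hy.symm)
    exact congrArg (WithLp.toLp 2) (happ.trans (Prod.ext hyq hxq))

theorem pmapGraph_eq (hthat : IsHatOf that t) :
    pmapGraph that = (((pmapGraph t).prod (pmapGraph t.adjoint)).comap
      (WithLp.linearEquiv 2 ℂ _).toLinearMap).comap
        ((LinearIsometryEquiv.withLpProdProdShuffle ℂ H H H H).toLinearEquiv :
          WithLp 2 (WithLp 2 (H × H) × WithLp 2 (H × H)) →ₗ[ℂ]
            WithLp 2 (WithLp 2 (H × H) × WithLp 2 (H × H))) := by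
  ext ⟨p, q⟩
  exact hthat.mem_graph_iff p q

theorem isClosed (hthat : IsHatOf that t) (hdt : Dense (t.domain : Set H)) (hct : t.IsClosed) :
    that.IsClosed := by
  rw [← isClosed_pmapGraph_iff, hthat.pmapGraph_eq, Submodule.comap_coe, Submodule.comap_coe,
    Submodule.prod_coe]
  exact (((isClosed_pmapGraph_iff t).2 hct).prod
    ((isClosed_pmapGraph_iff _).2 (LinearPMap.adjoint_isClosed hdt))).preimage
    ((WithLp.prodContinuousLinearEquiv 2 ℂ _ _).continuous.comp
      (LinearIsometryEquiv.withLpProdProdShuffle ℂ H H H H).continuous)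

theorem dense_domain (hthat : IsHatOf that t) (hdt : Dense (t.domain : Set H))
    (hct : t.IsClosed) : Dense (that.domain : Set (WithLp 2 (H × H))) := by
  rw [hthat.1, Submodule.comap_coe]
  exact (hdt.prod (LinearPMap.dense_adjoint_domain hdt hct)).preimage
    (WithLp.prodContinuousLinearEquiv 2 ℂ H H).toHomeomorph.isOpenMap

theorem isOrthogonalProjectionOnto_pmapGraph (hthat : IsHatOf that t)
    {P Q : WithLp 2 (H × H) →L[ℂ] WithLp 2 (H × H)}
    (hP : IsOrthogonalProjectionOnto P (pmapGraph t))
    (hQ : IsOrthogonalProjectionOnto Q (pmapGraph t.adjoint)) :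
    IsOrthogonalProjectionOnto
      ((LinearIsometryEquiv.withLpProdProdShuffle ℂ H H H H).symm.conjStarAlgEquiv
        (withLpProdMap P Q))
      (pmapGraph that) := by
  rw [hthat.pmapGraph_eq, Submodule.comap_equiv_eq_map_symm]
  exact (hP.withLpProdMap hQ).conj _

end IsHatOf

/-- Let `t, s` be densely defined closed operators on a complex Hilbert space `H`. Then
`t̂` and `ŝ` are densely defined closed operators on `H ⊕ H` and
`‖P_{G(t̂)} − P_{G(ŝ)}‖ = ‖P_{G(t)} − P_{G(s)}‖`: the map `t ↦ t̂` is isometric for the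
gap metric. -/
theorem stmt_14 {H : Type*} [NormedAddCommGroup H] [InnerProductSpace ℂ H] [CompleteSpace H]
    (t s : H →ₗ.[ℂ] H)
    (hdt : Dense (t.domain : Set H)) (hct : IsClosed (t.graph : Set (H × H)))
    (hds : Dense (s.domain : Set H)) (hcs : IsClosed (s.graph : Set (H × H)))
    (that shat : WithLp 2 (H × H) →ₗ.[ℂ] WithLp 2 (H × H))
    (hthat : IsHatOf that t) (hshat : IsHatOf shat s) :
    Dense (that.domain : Set (WithLp 2 (H × H))) ∧
    IsClosed (that.graph : Set (WithLp 2 (H × H) × WithLp 2 (H × H))) ∧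
    Dense (shat.domain : Set (WithLp 2 (H × H))) ∧
    IsClosed (shat.graph : Set (WithLp 2 (H × H) × WithLp 2 (H × H))) ∧
    ∀ Pt Ps : WithLp 2 (H × H) →L[ℂ] WithLp 2 (H × H),
      IsOrthogonalProjectionOnto Pt (pmapGraph t) →
      IsOrthogonalProjectionOnto Ps (pmapGraph s) →
      ∀ Pth Psh : WithLp 2 (WithLp 2 (H × H) × WithLp 2 (H × H)) →L[ℂ]
          WithLp 2 (WithLp 2 (H × H) × WithLp 2 (H × H)),
        IsOrthogonalProjectionOnto Pth (pmapGraph that) →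
        IsOrthogonalProjectionOnto Psh (pmapGraph shat) →
        ‖Pth - Psh‖ = ‖Pt - Ps‖ := by
  refine ⟨hthat.dense_domain hdt hct, hthat.isClosed hdt hct, hshat.dense_domain hds hcs,
    hshat.isClosed hds hcs, fun Pt Ps hPt hPs Pth Psh hPth hPsh => ?_⟩
  set W := (LinearIsometryEquiv.withLpProdProdShuffle ℂ H H H H).symm
  set J := (LinearIsometryEquiv.withLpSkewSwap ℂ H H).symm
  have hPth' := hPth.eq
    (hthat.isOrthogonalProjectionOnto_pmapGraph hPt (hPt.pmapGraph_adjoint hdt))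
  have hPsh' := hPsh.eq
    (hshat.isOrthogonalProjectionOnto_pmapGraph hPs (hPs.pmapGraph_adjoint hds))
  calc ‖Pth - Psh‖
      = ‖W.conjStarAlgEquiv (withLpProdMap (Pt - Ps) (J.conjStarAlgEquiv (Ps - Pt)))‖ := by
        rw [hPth', hPsh', ← map_sub, ← withLpProdMap_sub, sub_sub_sub_cancel_left, map_sub]
    _ = ‖Pt - Ps‖ := by
        rw [LinearIsometryEquiv.norm_conjStarAlgEquiv, norm_withLpProdMap,
          LinearIsometryEquiv.norm_conjStarAlgEquiv, norm_sub_rev Ps, max_self]
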